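/- arXiv:gr-qc/0509067 — 6 statements merged into one kernel-verified Lean document; each statement's English description precedes it below -/
import Mathlib

section
/- Let U ⊆ ℝ⁴ be a nonempty open set, Γ a smooth symmetric linear connection on U with curvature tensor R, and h a smooth Lorentz metric on U such that condition (2) holds on U. If Γ is Ricci flat on U, i.e. the Ricci tensor R_{bd} := R^c_{bcd} vanishes identically on U, then there is no point of U at which the curvature is of class D. -/
open scoped BigOperators

noncomputable section

abbrev Pt : Type := Fin 4 → ℝ

/-- Partial derivative in the `c`-th coordinate direction. -/
def pd (f : Pt → ℝ) (c : Fin 4) (m : Pt) : ℝ :=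
  fderiv ℝ f m (Pi.single c 1)

/-- Curvature components `R^a_{bcd}` of a connection with components `Γ m a b c = Γ^a_{bc}`. -/
def curv (Γ : Pt → Fin 4 → Fin 4 → Fin 4 → ℝ) (m : Pt) (a b c d : Fin 4) : ℝ :=
  pd (fun x => Γ x a d b) c m - pd (fun x => Γ x a c b) d m
    + ∑ e, Γ m a c e * Γ m e d b - ∑ e, Γ m a d e * Γ m e c b

/-- A smooth symmetric linear connection on `U`. -/
def IsSmoothConn (U : Set Pt) (Γ : Pt → Fin 4 → Fin 4 → Fin 4 → ℝ) : Prop :=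
  (∀ a b c, ContDiffOn ℝ (⊤ : ℕ∞) (fun m => Γ m a b c) U) ∧
    ∀ m ∈ U, ∀ a b c, Γ m a b c = Γ m a c b

def eta : Fin 4 → Fin 4 → ℝ := fun a b =>
  if a = b then (if a = 0 then -1 else 1) else 0

/-- A symmetric bilinear form on `ℝ⁴` of Lorentz signature `(-,+,+,+)`. -/
def IsLorentzAt (H : Fin 4 → Fin 4 → ℝ) : Prop :=
  (∀ a b, H a b = H b a) ∧
    ∃ e : Fin 4 → Fin 4 → ℝ, ∀ i j, (∑ a, ∑ b, e i a * H a b * e j b) = eta i j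

/-- A smooth Lorentz metric on `U`. -/
def IsLorentzMetricOn (U : Set Pt) (h : Pt → Fin 4 → Fin 4 → ℝ) : Prop :=
  (∀ a b, ContDiffOn ℝ (⊤ : ℕ∞) (fun m => h m a b) U) ∧ ∀ m ∈ U, IsLorentzAt (h m)

/-- Covariant derivative `g_{ab;c}` of a `(0,2)` tensor field. -/
def cov2 (Γ : Pt → Fin 4 → Fin 4 → Fin 4 → ℝ) (g : Pt → Fin 4 → Fin 4 → ℝ)
    (m : Pt) (a b c : Fin 4) : ℝ :=
  pd (fun x => g x a b) c m - ∑ e, Γ m e a c * g m e b - ∑ e, Γ m e b c * g m a e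

/-- One further covariant derivative of a curvature-type `(1,3+k)` tensor field. -/
def covStep (Γ : Pt → Fin 4 → Fin 4 → Fin 4 → ℝ) {k : ℕ}
    (T : Pt → Fin 4 → Fin 4 → Fin 4 → Fin 4 → (Fin k → Fin 4) → ℝ) :
    Pt → Fin 4 → Fin 4 → Fin 4 → Fin 4 → (Fin (k + 1) → Fin 4) → ℝ :=
  fun m a b c d fs =>
    pd (fun x => T x a b c d fun i => fs i.castSucc) (fs (Fin.last k)) m
      + ∑ e, Γ m a e (fs (Fin.last k)) * T m e b c d (fun i => fs i.castSucc)
      - ∑ e, Γ m e b (fs (Fin.last k)) * T m a e c d (fun i => fs i.castSucc)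
      - ∑ e, Γ m e c (fs (Fin.last k)) * T m a b e d (fun i => fs i.castSucc)
      - ∑ e, Γ m e d (fs (Fin.last k)) * T m a b c e (fun i => fs i.castSucc)
      - ∑ i : Fin k, ∑ e, Γ m e (fs i.castSucc) (fs (Fin.last k)) *
          T m a b c d (Function.update (fun j => fs j.castSucc) i e)

/-- Iterated covariant derivatives `R^a_{bcd;f₁⋯f_k}` of the curvature tensor. -/
def curvD (Γ : Pt → Fin 4 → Fin 4 → Fin 4 → ℝ) :
    (k : ℕ) → Pt → Fin 4 → Fin 4 → Fin 4 → Fin 4 → (Fin k → Fin 4) → ℝ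
  | 0 => fun m a b c d _ => curv Γ m a b c d
  | (k + 1) => covStep Γ (curvD Γ k)

/-- Condition (2) (case `j = 0`) and condition (3.j) (case `j ≥ 1`) on `U`. -/
def CondK (Γ : Pt → Fin 4 → Fin 4 → Fin 4 → ℝ) (h : Pt → Fin 4 → Fin 4 → ℝ)
    (U : Set Pt) (j : ℕ) : Prop :=
  ∀ m ∈ U, ∀ a b c d : Fin 4, ∀ fs : Fin j → Fin 4,
    (∑ e, h m a e * curvD Γ j m e b c d fs) + (∑ e, h m b e * curvD Γ j m e a c d fs) = 0

/-- The range of the linear map `f_m` sending a bivector `F^{cd}` to `R^a_{bcd}F^{cd}`. -/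
def rangeF (Γ : Pt → Fin 4 → Fin 4 → Fin 4 → ℝ) (m : Pt) :
    Submodule ℝ (Matrix (Fin 4) (Fin 4) ℝ) :=
  Submodule.span ℝ {T | ∃ F : Matrix (Fin 4) (Fin 4) ℝ, F.transpose = -F ∧
    T = Matrix.of fun a b => ∑ c, ∑ d, curv Γ m a b c d * F c d}

def hprod (H : Fin 4 → Fin 4 → ℝ) (u v : Fin 4 → ℝ) : ℝ := ∑ a, ∑ b, H a b * u a * v b

/-- A null tetrad for the Lorentz form `H`. -/
def NullTetrad (H : Fin 4 → Fin 4 → ℝ) (l n x y : Fin 4 → ℝ) : Prop :=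
  hprod H l l = 0 ∧ hprod H n n = 0 ∧ hprod H x x = 1 ∧ hprod H y y = 1 ∧
    hprod H l n = 1 ∧ hprod H l x = 0 ∧ hprod H l y = 0 ∧ hprod H n x = 0 ∧
    hprod H n y = 0 ∧ hprod H x y = 0

def lowerIdx (H : Fin 4 → Fin 4 → ℝ) (u : Fin 4 → ℝ) : Fin 4 → ℝ := fun a => ∑ e, H a e * u e

/-- The endomorphism with components `u^a v_b - v^a u_b` (indices lowered with `H`). -/
def endoOf (H : Fin 4 → Fin 4 → ℝ) (u v : Fin 4 → ℝ) : Matrix (Fin 4) (Fin 4) ℝ :=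
  Matrix.of fun a b => u a * lowerIdx H v b - v a * lowerIdx H u b

/-- The bivector with components `u_a v_b - v_a u_b` (indices lowered with `H`). -/
def bivOf (H : Fin 4 → Fin 4 → ℝ) (u v : Fin 4 → ℝ) : Fin 4 → Fin 4 → ℝ :=
  fun a b => lowerIdx H u a * lowerIdx H v b - lowerIdx H v a * lowerIdx H u b

/-- Lowered curvature `R_{abcd} = h_{ae}R^e_{bcd}`. -/
def RLow (h : Pt → Fin 4 → Fin 4 → ℝ) (Γ : Pt → Fin 4 → Fin 4 → Fin 4 → ℝ)
    (m : Pt) (a b c d : Fin 4) : ℝ :=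
  ∑ e, h m a e * curv Γ m e b c d

def ClassO (Γ : Pt → Fin 4 → Fin 4 → Fin 4 → ℝ) (m : Pt) : Prop :=
  ∀ a b c d, curv Γ m a b c d = 0

def ClassD (Γ : Pt → Fin 4 → Fin 4 → Fin 4 → ℝ) (m : Pt) : Prop :=
  Module.finrank ℝ (rangeF Γ m) = 1

def ClassC (Γ : Pt → Fin 4 → Fin 4 → Fin 4 → ℝ) (m : Pt) : Prop :=
  (Module.finrank ℝ (rangeF Γ m) = 2 ∨ Module.finrank ℝ (rangeF Γ m) = 3) ∧
    ∃ k : Fin 4 → ℝ, k ≠ 0 ∧ ∀ T ∈ rangeF Γ m, T.mulVec k = 0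

def ClassB (Γ : Pt → Fin 4 → Fin 4 → Fin 4 → ℝ) (h : Pt → Fin 4 → Fin 4 → ℝ)
    (m : Pt) : Prop :=
  ∃ l n x y : Fin 4 → ℝ, NullTetrad (h m) l n x y ∧
    Module.finrank ℝ (rangeF Γ m) = 2 ∧
    rangeF Γ m = Submodule.span ℝ {endoOf (h m) x y, endoOf (h m) l n}

def ClassBCoeffs (Γ : Pt → Fin 4 → Fin 4 → Fin 4 → ℝ) (h : Pt → Fin 4 → Fin 4 → ℝ)
    (m : Pt) (α β : ℝ) (l n x y : Fin 4 → ℝ) : Prop :=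
  NullTetrad (h m) l n x y ∧
    Module.finrank ℝ (rangeF Γ m) = 2 ∧
    rangeF Γ m = Submodule.span ℝ {endoOf (h m) x y, endoOf (h m) l n} ∧
    α ≠ 0 ∧ β ≠ 0 ∧
    ∀ a b c d, RLow h Γ m a b c d =
      α / 2 * bivOf (h m) x y a b * bivOf (h m) x y c d
        - β / 2 * bivOf (h m) l n a b * bivOf (h m) l n c d

def ClassB1 (Γ : Pt → Fin 4 → Fin 4 → Fin 4 → ℝ) (h : Pt → Fin 4 → Fin 4 → ℝ)
    (m : Pt) : Prop :=
  ∃ α β : ℝ, ∃ l n x y : Fin 4 → ℝ, ClassBCoeffs Γ h m α β l n x y ∧ α ≠ β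

def ClassB2 (Γ : Pt → Fin 4 → Fin 4 → Fin 4 → ℝ) (h : Pt → Fin 4 → Fin 4 → ℝ)
    (m : Pt) : Prop :=
  ∃ α β : ℝ, ∃ l n x y : Fin 4 → ℝ, ClassBCoeffs Γ h m α β l n x y ∧ α = β

def ClassA (Γ : Pt → Fin 4 → Fin 4 → Fin 4 → ℝ) (h : Pt → Fin 4 → Fin 4 → ℝ)
    (m : Pt) : Prop :=
  ¬ ClassB Γ h m ∧ ¬ ClassC Γ m ∧ ¬ ClassD Γ m ∧ ¬ ClassO Γ m


section Aux

lemma pd_congr {U : Set Pt} (hU : IsOpen U) {m : Pt} (hm : m ∈ U) {f g : Pt → ℝ}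
    (hfg : ∀ x ∈ U, f x = g x) (c : Fin 4) : pd f c m = pd g c m := by
  have hev : f =ᶠ[nhds m] g := Filter.eventuallyEq_of_mem (hU.mem_nhds hm) hfg
  unfold pd
  rw [hev.fderiv_eq]

lemma curv_antisym (Γ : Pt → Fin 4 → Fin 4 → Fin 4 → ℝ) (m : Pt) (a b c d : Fin 4) :
    curv Γ m a b c d = - curv Γ m a b d c := by
  unfold curv; ring

lemma bianchi {U : Set Pt} (hU : IsOpen U) {Γ : Pt → Fin 4 → Fin 4 → Fin 4 → ℝ}
    (hΓ : IsSmoothConn U Γ) {m : Pt} (hm : m ∈ U) (a b c d : Fin 4) :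
    curv Γ m a b c d + curv Γ m a c d b + curv Γ m a d b c = 0 := by
  obtain ⟨-, hsym⟩ := hΓ
  have p1 : pd (fun x => Γ x a d b) c m = pd (fun x => Γ x a b d) c m :=
    pd_congr hU hm (fun x hx => hsym x hx a d b) c
  have p2 : pd (fun x => Γ x a c b) d m = pd (fun x => Γ x a b c) d m :=
    pd_congr hU hm (fun x hx => hsym x hx a c b) d
  have p3 : pd (fun x => Γ x a d c) b m = pd (fun x => Γ x a c d) b m :=
    pd_congr hU hm (fun x hx => hsym x hx a d c) b
  have hs : ∀ e b c, Γ m e b c = Γ m e c b := fun e b c => hsym m hm e b c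
  unfold curv
  rw [p1, p2, p3]
  have sum1 : ∑ e, Γ m a c e * Γ m e d b = ∑ e, Γ m a c e * Γ m e b d := by
    apply Finset.sum_congr rfl; intro e _; rw [hs e d b]
  have sum2 : ∑ e, Γ m a d e * Γ m e c b = ∑ e, Γ m a d e * Γ m e b c := by
    apply Finset.sum_congr rfl; intro e _; rw [hs e c b]
  have sum3 : ∑ e, Γ m a b e * Γ m e d c = ∑ e, Γ m a b e * Γ m e c d := by
    apply Finset.sum_congr rfl; intro e _; rw [hs e d c]
  rw [sum1, sum2, sum3]
  ring

lemma pair_symm (R : Fin 4 → Fin 4 → Fin 4 → Fin 4 → ℝ)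
    (h1 : ∀ a b c d, R a b c d = - R b a c d)
    (h2 : ∀ a b c d, R a b c d = - R a b d c)
    (h3 : ∀ a b c d, R a b c d + R a c d b + R a d b c = 0) :
    ∀ a b c d, R a b c d = R c d a b := by
  intro a b c d
  linarith [h3 a b c d, h3 b a d c, h3 c d a b, h3 d c b a,
    h1 b a d c, h2 a b d c, h1 d c b a, h2 c d b a,
    h1 b d c a, h2 d b a c, h1 a d c b,
    h1 b c a d, h2 c b d a, h1 a c b d,
    h1 d b a c, h2 b d c a,
    h1 d a c b, h2 a d b c,
    h1 c a b d, h2 a c d b,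
    h1 c b d a, h2 b c a d]

def etam : Matrix (Fin 4) (Fin 4) ℝ := Matrix.of eta

lemma lorentz_core (S : Matrix (Fin 4) (Fin 4) ℝ) (ha : S.transpose = -S)
    (h0 : S * etam * S = 0) : S = 0 := by
  have hA : ∀ i j, S j i = - S i j := fun i j => by
    have := congrFun (congrFun ha i) j; simpa [Matrix.transpose_apply] using this
  have z : ∀ i, S i i = 0 := fun i => by have := hA i i; linarith
  have key : ∀ i j, (S * etam * S) i j = 0 := fun i j => by rw [h0]; rfl
  have q : ∀ i j, -(S i 0 * S 0 j) + S i 1 * S 1 j + S i 2 * S 2 j + S i 3 * S 3 j = 0 := by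
    intro i j
    have := key i j
    simpa [Matrix.mul_apply, etam, eta, Fin.sum_univ_four, Matrix.of_apply] using this
  have r0 : S 0 1 * S 0 1 + S 0 2 * S 0 2 + S 0 3 * S 0 3 = 0 := by
    linear_combination -(q 0 0) + S 0 1 * hA 0 1 + S 0 2 * hA 0 2 + S 0 3 * hA 0 3 - S 0 0 * z 0
  have a01 : S 0 1 = 0 := mul_self_eq_zero.mp (by
    linarith [mul_self_nonneg (S 0 1), mul_self_nonneg (S 0 2), mul_self_nonneg (S 0 3)])
  have a02 : S 0 2 = 0 := mul_self_eq_zero.mp (by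
    linarith [mul_self_nonneg (S 0 1), mul_self_nonneg (S 0 2), mul_self_nonneg (S 0 3)])
  have a03 : S 0 3 = 0 := mul_self_eq_zero.mp (by
    linarith [mul_self_nonneg (S 0 1), mul_self_nonneg (S 0 2), mul_self_nonneg (S 0 3)])
  have r1 : S 1 2 * S 1 2 + S 1 3 * S 1 3 = 0 := by
    linear_combination -(q 1 1) - S 1 0 * a01 + S 1 1 * z 1 + S 1 2 * hA 1 2 + S 1 3 * hA 1 3
  have a12 : S 1 2 = 0 := mul_self_eq_zero.mp (by
    linarith [mul_self_nonneg (S 1 2), mul_self_nonneg (S 1 3)])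
  have a13 : S 1 3 = 0 := mul_self_eq_zero.mp (by
    linarith [mul_self_nonneg (S 1 2), mul_self_nonneg (S 1 3)])
  have r2 : S 2 3 * S 2 3 = 0 := by
    linear_combination -(q 2 2) - S 2 0 * a02 - S 2 1 * a12 + S 2 1 * hA 1 2 + S 2 2 * z 2
      + S 2 3 * hA 2 3 - S 2 1 * hA 1 2 + 2 * S 2 1 * a12
  have a23 : S 2 3 = 0 := mul_self_eq_zero.mp r2
  have b10 : S 1 0 = 0 := by rw [hA 0 1, a01, neg_zero]
  have b20 : S 2 0 = 0 := by rw [hA 0 2, a02, neg_zero]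
  have b30 : S 3 0 = 0 := by rw [hA 0 3, a03, neg_zero]
  have b21 : S 2 1 = 0 := by rw [hA 1 2, a12, neg_zero]
  have b31 : S 3 1 = 0 := by rw [hA 1 3, a13, neg_zero]
  have b32 : S 3 2 = 0 := by rw [hA 2 3, a23, neg_zero]
  have z0 := z 0; have z1 := z 1; have z2 := z 2; have z3 := z 3
  ext i j
  fin_cases i <;> fin_cases j <;> simp only [Matrix.zero_apply] <;> assumption

lemma etam_sq : etam * etam = 1 := by
  ext i j
  fin_cases i <;> fin_cases j <;>
    simp [etam, eta, Matrix.mul_apply, Fin.sum_univ_four, Matrix.one_apply] <;> norm_num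

end Aux

/-- Under condition (2), if `Γ` is Ricci flat on `U` (i.e. `R^c_{bcd} = 0` on `U`)
then the curvature is of class `D` at no point of `U`. -/
theorem ricci_flat_no_classD
    (U : Set Pt) (hUopen : IsOpen U) (hUne : U.Nonempty)
    (Γ : Pt → Fin 4 → Fin 4 → Fin 4 → ℝ) (hΓ : IsSmoothConn U Γ)
    (h : Pt → Fin 4 → Fin 4 → ℝ) (hh : IsLorentzMetricOn U h)
    (hcond2 : CondK Γ h U 0)
    (hricci : ∀ m ∈ U, ∀ b d : Fin 4, (∑ c, curv Γ m c b c d) = 0) :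
    ∀ m ∈ U, ¬ ClassD Γ m := by
  intro m hm hD
  -- extract spanning matrix T
  obtain ⟨v, hv0, hvspan⟩ := finrank_eq_one_iff'.mp hD
  set T : Matrix (Fin 4) (Fin 4) ℝ := (v : Matrix (Fin 4) (Fin 4) ℝ) with hTdef
  have hT0 : T ≠ 0 := fun h0 => hv0 (Subtype.ext h0)
  have hall : ∀ W ∈ rangeF Γ m, ∃ k : ℝ, W = k • T := by
    intro W hW
    obtain ⟨k, hk⟩ := hvspan ⟨W, hW⟩
    refine ⟨k, ?_⟩
    have := congrArg Subtype.val hk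
    simpa using this.symm
  -- structure: curv = k(c,d) * T
  have hstruct : ∀ c d : Fin 4, ∃ k : ℝ, ∀ a b, curv Γ m a b c d = k * T a b := by
    intro c d
    set F : Matrix (Fin 4) (Fin 4) ℝ := Matrix.of fun i j =>
      (if i = c ∧ j = d then (1:ℝ) else 0) - (if i = d ∧ j = c then 1 else 0) with hFdef
    have hFanti : F.transpose = -F := by
      ext i j
      simp only [Matrix.transpose_apply, Matrix.neg_apply, hFdef, Matrix.of_apply]
      rw [show (if (j = c ∧ i = d) then (1:ℝ) else 0) = (if (i = d ∧ j = c) then (1:ℝ) else 0)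
          from if_congr and_comm rfl rfl,
        show (if (j = d ∧ i = c) then (1:ℝ) else 0) = (if (i = c ∧ j = d) then (1:ℝ) else 0)
          from if_congr and_comm rfl rfl]
      ring
    have hsum : ∀ a b, (∑ c', ∑ d', curv Γ m a b c' d' * F c' d') = 2 * curv Γ m a b c d := by
      intro a b
      have : (∑ c', ∑ d', curv Γ m a b c' d' * F c' d')
          = curv Γ m a b c d - curv Γ m a b d c := by
        simp [hFdef, mul_sub, Finset.sum_sub_distrib, mul_ite, mul_one, mul_zero, ite_and,
          Finset.sum_ite_eq', Finset.sum_ite_eq]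
      rw [this, curv_antisym Γ m a b d c]; ring
    have hGmem : (Matrix.of fun a b => ∑ c', ∑ d', curv Γ m a b c' d' * F c' d') ∈ rangeF Γ m :=
      Submodule.subset_span ⟨F, hFanti, rfl⟩
    obtain ⟨k, hk⟩ := hall _ hGmem
    refine ⟨k / 2, fun a b => ?_⟩
    have h1 : (Matrix.of fun a b => ∑ c', ∑ d', curv Γ m a b c' d' * F c' d') a b
        = (k • T) a b := by rw [hk]
    have h2 : (2:ℝ) * curv Γ m a b c d = k * T a b := by
      rw [← hsum a b]; simpa [Matrix.smul_apply, smul_eq_mul] using h1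
    linarith
  -- nonzero entry of T
  have hTent : ∃ a₀ b₀, T a₀ b₀ ≠ 0 := by
    by_contra hno
    push_neg at hno
    exact hT0 (Matrix.ext fun a b => hno a b)
  obtain ⟨a₀, b₀, ha₀b₀⟩ := hTent
  set μ : Fin 4 → Fin 4 → ℝ := fun c d => curv Γ m a₀ b₀ c d / T a₀ b₀ with hμdef
  have hfact : ∀ a b c d, curv Γ m a b c d = T a b * μ c d := by
    intro a b c d
    obtain ⟨k, hk⟩ := hstruct c d
    have hμ : μ c d = k := by
      rw [hμdef]; simp only []; rw [hk a₀ b₀]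
      field_simp
    rw [hμ, hk a b, mul_comm]
  -- μ antisymmetric, nonzero
  have hμanti : ∀ c d, μ c d = - μ d c := by
    intro c d
    have h1 := hfact a₀ b₀ c d
    have h2 := hfact a₀ b₀ d c
    have h3 := curv_antisym Γ m a₀ b₀ c d
    have : T a₀ b₀ * μ c d = T a₀ b₀ * (- μ d c) := by rw [← h1]; rw [h3, h2]; ring
    exact mul_left_cancel₀ ha₀b₀ this
  have hμne : ∃ c₀ d₀, μ c₀ d₀ ≠ 0 := by
    by_contra hno
    push_neg at hno
    have hcz : ∀ a b c d, curv Γ m a b c d = 0 := by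
      intro a b c d; rw [hfact a b c d, hno c d, mul_zero]
    have hle : rangeF Γ m ≤ ⊥ := by
      rw [rangeF, Submodule.span_le]
      rintro W ⟨F, -, rfl⟩
      simp only [SetLike.mem_coe, Submodule.mem_bot]
      ext a b
      simp [hcz]
    exact hT0 ((Submodule.mem_bot ℝ).mp (hle v.2))
  obtain ⟨c₀, d₀, hμ₀⟩ := hμne
  -- the metric matrix and lowered tensor S = H * T
  obtain ⟨-, hLor⟩ := hh
  obtain ⟨hHsymm, e, he⟩ := hLor m hm
  set H : Matrix (Fin 4) (Fin 4) ℝ := Matrix.of (h m) with hHdef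
  set E : Matrix (Fin 4) (Fin 4) ℝ := Matrix.of e with hEdef
  have hEHE : E * H * E.transpose = etam := by
    ext i j
    have h1 : (E * H * E.transpose) i j = ∑ b, ∑ a, e i a * h m a b * e j b := by
      simp only [Matrix.mul_apply, Matrix.transpose_apply, hEdef, hHdef, Matrix.of_apply,
        Finset.sum_mul]
    rw [h1, Finset.sum_comm]
    exact he i j
  set S : Matrix (Fin 4) (Fin 4) ℝ := H * T with hSdef
  -- condition (2) at m gives antisymmetry of S
  have hcond : ∀ a b : Fin 4, (S a b + S b a) * μ c₀ d₀ = 0 := by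
    intro a b
    have hc := hcond2 m hm a b c₀ d₀ (fun i => i.elim0)
    have hcc : (∑ x, h m a x * curv Γ m x b c₀ d₀) + (∑ x, h m b x * curv Γ m x a c₀ d₀) = 0 := by
      simpa [curvD] using hc
    have h1 : S a b = ∑ x, h m a x * T x b := by
      simp [hSdef, Matrix.mul_apply, hHdef]
    have h2 : S b a = ∑ x, h m b x * T x a := by
      simp [hSdef, Matrix.mul_apply, hHdef]
    calc (S a b + S b a) * μ c₀ d₀
        = (∑ x, h m a x * curv Γ m x b c₀ d₀) + (∑ x, h m b x * curv Γ m x a c₀ d₀) := by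
          rw [h1, h2]
          simp only [Finset.sum_mul, add_mul, ← Finset.sum_add_distrib]
          apply Finset.sum_congr rfl
          intro x _
          rw [hfact x b c₀ d₀, hfact x a c₀ d₀]; ring
      _ = 0 := hcc
  have hSanti : ∀ a b, S b a = - S a b := by
    intro a b
    have := hcond a b
    have h2 : S a b + S b a = 0 := by
      rcases mul_eq_zero.mp this with h | h
      · exact h
      · exact absurd h hμ₀
    linarith
  -- lowered Bianchi and pair symmetry
  have hBL : ∀ a b c d, S a b * μ c d + S a c * μ d b + S a d * μ b c = 0 := by
    intro a b c d
    have hTB : ∀ x, T x b * μ c d + T x c * μ d b + T x d * μ b c = 0 := by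
      intro x
      have hb := bianchi hUopen hΓ hm x b c d
      rw [hfact x b c d, hfact x c d b, hfact x d b c] at hb
      linarith
    have h1 : S a b * μ c d + S a c * μ d b + S a d * μ b c
        = ∑ x, h m a x * (T x b * μ c d + T x c * μ d b + T x d * μ b c) := by
      simp only [hSdef, Matrix.mul_apply, hHdef, Matrix.of_apply, Finset.sum_mul,
        ← Finset.sum_add_distrib]
      apply Finset.sum_congr rfl
      intro x _
      ring
    rw [h1]
    simp [hTB]
  have hPS : ∀ a b c d, S a b * μ c d = S c d * μ a b := by
    have := pair_symm (fun a b c d => S a b * μ c d)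
      (fun a b c d => show S a b * μ c d = -(S b a * μ c d) by rw [hSanti a b]; ring)
      (fun a b c d => show S a b * μ c d = -(S a b * μ d c) by rw [hμanti c d]; ring)
      hBL
    exact this
  -- S ≠ 0
  have hdetinfo : E.det * H.det * E.det = etam.det := by
    have : (E * H * E.transpose).det = etam.det := by rw [hEHE]
    rwa [Matrix.det_mul, Matrix.det_mul, Matrix.det_transpose] at this
  have hetadet : etam.det ≠ 0 := by
    have hsq : etam.det * etam.det = 1 := by
      have := congrArg Matrix.det etam_sq
      rwa [Matrix.det_mul, Matrix.det_one] at this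
    intro h0
    rw [h0, mul_zero] at hsq
    exact one_ne_zero hsq.symm
  have hEdet : E.det ≠ 0 := by
    intro h0; rw [h0] at hdetinfo; simp at hdetinfo; exact hetadet hdetinfo.symm
  have hHdetu : IsUnit H.det := by
    refine isUnit_iff_ne_zero.mpr fun h0 => ?_
    rw [h0] at hdetinfo; simp at hdetinfo; exact hetadet hdetinfo.symm
  have hEdetu : IsUnit E.det := isUnit_iff_ne_zero.mpr hEdet
  have hS0 : S ≠ 0 := by
    intro h0
    apply hT0
    have : H⁻¹ * (H * T) = H⁻¹ * 0 := by rw [← hSdef, h0]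
    rwa [← Matrix.mul_assoc, Matrix.nonsing_inv_mul H hHdetu, Matrix.one_mul,
      Matrix.mul_zero] at this
  have hSent : ∃ p q, S p q ≠ 0 := by
    by_contra hno
    push_neg at hno
    exact hS0 (Matrix.ext fun p q => hno p q)
  obtain ⟨p, q, hpq⟩ := hSent
  -- μ = κ • S
  set κ : ℝ := μ p q / S p q with hκdef
  have hμS : ∀ c d, μ c d = κ * S c d := by
    intro c d
    have := hPS p q c d
    rw [hκdef]
    field_simp
    linarith [this]
  have hκ0 : κ ≠ 0 := by
    intro h0
    apply hμ₀
    rw [hμS c₀ d₀, h0, zero_mul]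
  -- Ricci flatness gives Tᵗ * S = 0
  have hTS : T.transpose * S = 0 := by
    ext b d
    have hric := hricci m hm b d
    have h1 : ∑ c, T c b * μ c d = 0 := by
      rw [← hric]
      apply Finset.sum_congr rfl
      intro c _
      exact (hfact c b c d).symm
    have h2 : κ * (∑ c, T c b * S c d) = 0 := by
      rw [← h1, Finset.mul_sum]
      apply Finset.sum_congr rfl
      intro c _
      rw [hμS c d]; ring
    have h3 : (∑ c, T c b * S c d) = 0 := by
      rcases mul_eq_zero.mp h2 with hh' | hh'
      · exact absurd hh' hκ0
      · exact hh'
    simp only [Matrix.mul_apply, Matrix.transpose_apply, Matrix.zero_apply]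
    exact h3
  -- translate to S * H⁻¹ * S = 0
  have hTinv : T = H⁻¹ * S := by
    rw [hSdef, ← Matrix.mul_assoc, Matrix.nonsing_inv_mul H hHdetu, Matrix.one_mul]
  have hHsymM : H.transpose = H := by
    ext i j; simp [hHdef, Matrix.transpose_apply, hHsymm j i]
  have hSantiM : S.transpose = -S := by
    ext i j; simp [Matrix.transpose_apply, hSanti i j, Matrix.neg_apply]
  have hTt : T.transpose = -S * H⁻¹ := by
    rw [hTinv, Matrix.transpose_mul, Matrix.transpose_nonsing_inv, hHsymM, hSantiM]
  have hSHS : S * H⁻¹ * S = 0 := by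
    have h1 : -S * H⁻¹ * S = 0 := by rw [← hTt, hTS]
    rw [Matrix.neg_mul, Matrix.neg_mul, neg_eq_zero] at h1
    exact h1
  -- transform with the tetrad matrix E to the standard Lorentz form
  have hHE : H * E.transpose = E⁻¹ * etam := by
    have h1 : E⁻¹ * (E * H * E.transpose) = E⁻¹ * etam := by rw [hEHE]
    rwa [← Matrix.mul_assoc, ← Matrix.mul_assoc, Matrix.nonsing_inv_mul E hEdetu,
      Matrix.one_mul] at h1
  have hrinv : H * (E.transpose * etam * E) = 1 := by
    calc H * (E.transpose * etam * E) = (H * E.transpose) * etam * E := by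
          rw [← Matrix.mul_assoc, ← Matrix.mul_assoc]
      _ = E⁻¹ * (etam * etam) * E := by rw [hHE, Matrix.mul_assoc E⁻¹]
      _ = E⁻¹ * E := by rw [etam_sq, Matrix.mul_one]
      _ = 1 := Matrix.nonsing_inv_mul E hEdetu
  have hinv : H⁻¹ = E.transpose * etam * E := Matrix.inv_eq_right_inv hrinv
  set S' : Matrix (Fin 4) (Fin 4) ℝ := E * S * E.transpose with hS'def
  have hS'eq : S' * etam * S' = 0 := by
    have h2 : S * (E.transpose * etam * E) * S = 0 := by rw [← hinv]; exact hSHS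
    calc S' * etam * S' = E * (S * (E.transpose * etam * E) * S) * E.transpose := by
          simp only [hS'def, Matrix.mul_assoc]
      _ = 0 := by rw [h2, Matrix.mul_zero, Matrix.zero_mul]
  have hS'anti : S'.transpose = -S' := by
    rw [hS'def]
    simp only [Matrix.transpose_mul, Matrix.transpose_transpose, hSantiM,
      Matrix.neg_mul, Matrix.mul_neg, Matrix.mul_assoc]
  have hS'0 : S' = 0 := lorentz_core S' hS'anti hS'eq
  have hEt : IsUnit E.transpose.det := by rw [Matrix.det_transpose]; exact hEdetu
  have hfinal : S = 0 := by
    have h3 : E⁻¹ * S' * (E.transpose)⁻¹ = S := by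
      rw [hS'def]
      calc E⁻¹ * (E * S * E.transpose) * (E.transpose)⁻¹
          = (E⁻¹ * E) * S * (E.transpose * (E.transpose)⁻¹) := by
            simp only [Matrix.mul_assoc]
        _ = S := by
            rw [Matrix.nonsing_inv_mul E hEdetu, Matrix.mul_nonsing_inv _ hEt,
              Matrix.one_mul, Matrix.mul_one]
    rw [hS'0] at h3
    simpa using h3.symm
  exact hS0 hfinal

end
end

section
/- Let η = diag(−1,1,1,1) be the 4×4 Minkowski matrix. If F is a real 4×4 skew-symmetric matrix of rank at most 2 such that Fᵀ η F = 0, then F = 0. (Equivalently: there is no nonzero simple bivector F on 4-dimensional Lorentz space satisfying the Ricci-flatness contraction F^c_b F_{cd} = 0.) -/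
set_option maxHeartbeats 800000


/-- If `F` is a real 4×4 skew-symmetric matrix of rank at most 2 (a simple bivector)
with `Fᵀ η F = 0` for the Minkowski matrix `η = diag(-1,1,1,1)`, then `F = 0`. -/
theorem simple_bivector_null_contraction_eq_zero
    (F : Matrix (Fin 4) (Fin 4) ℝ)
    (hskew : F.transpose = -F)
    (hrank : F.rank ≤ 2)
    (hcontr : F.transpose * Matrix.diagonal ![(-1 : ℝ), 1, 1, 1] * F = 0) :
    F = 0 := by
  have hs : ∀ i j, F i j = - F j i := by
    intro i j
    have := congrFun (congrFun hskew j) i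
    simpa [Matrix.transpose_apply] using this
  have hdiag : ∀ i, F i i = 0 := by
    intro i; have := hs i i; linarith
  have hentry : ∀ i j : Fin 4,
      (F.transpose * Matrix.diagonal ![(-1 : ℝ), 1, 1, 1] * F) i j = 0 := by
    intro i j; rw [hcontr]; rfl
  have h00 := hentry 0 0
  have h11 := hentry 1 1
  have h22 := hentry 2 2
  simp [Matrix.mul_apply, Matrix.diagonal, Fin.sum_univ_four,
    Matrix.transpose_apply] at h00 h11 h22
  clear hentry hcontr hskew hrank
  rw [hdiag 0] at h00
  have e10 : F 1 0 = 0 := by nlinarith [sq_nonneg (F 1 0), sq_nonneg (F 2 0), sq_nonneg (F 3 0)]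
  have e20 : F 2 0 = 0 := by nlinarith [sq_nonneg (F 1 0), sq_nonneg (F 2 0), sq_nonneg (F 3 0)]
  have e30 : F 3 0 = 0 := by nlinarith [sq_nonneg (F 1 0), sq_nonneg (F 2 0), sq_nonneg (F 3 0)]
  have e01 : F 0 1 = 0 := by rw [hs 0 1, e10]; ring
  rw [e01, hdiag 1] at h11
  have e21 : F 2 1 = 0 := by nlinarith [sq_nonneg (F 2 1), sq_nonneg (F 3 1)]
  have e31 : F 3 1 = 0 := by nlinarith [sq_nonneg (F 2 1), sq_nonneg (F 3 1)]
  have e02 : F 0 2 = 0 := by rw [hs 0 2, e20]; ring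
  have e12 : F 1 2 = 0 := by rw [hs 1 2, e21]; ring
  rw [e02, e12, hdiag 2] at h22
  have e32 : F 3 2 = 0 := by nlinarith [sq_nonneg (F 3 2)]
  have e03 : F 0 3 = 0 := by rw [hs 0 3, e30]; ring
  have e13 : F 1 3 = 0 := by rw [hs 1 3, e31]; ring
  have e23 : F 2 3 = 0 := by rw [hs 2 3, e32]; ring
  ext i j
  fin_cases i <;> fin_cases j <;>
    simp [hdiag, e01, e02, e03, e10, e12, e13, e20, e21, e23, e30, e31, e32]
end

section
/- Let V be a 4-dimensional real vector space and F an antisymmetric bilinear form on V (a bivector, with components F_{ab} = −F_{ba}). If F satisfies F_{a[b}F_{cd]} = 0, i.e. F_{ab}F_{cd} + F_{ac}F_{db} + F_{ad}F_{bc} = 0 for all indices, then F is simple: there exist covectors p, q with F_{ab} = p_a q_b − q_a p_b (equivalently, F has rank at most 2). -/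
/-- A bivector `F` (antisymmetric bilinear form) on a 4-dimensional real vector
space satisfying the Plücker-type identity `F_{ab}F_{cd} + F_{ac}F_{db} + F_{ad}F_{bc} = 0`
is simple: `F = p ∧ q` for some covectors `p, q`. -/
theorem bivector_plucker_implies_simple
    (V : Type*) [AddCommGroup V] [Module ℝ V]
    (hdim : Module.finrank ℝ V = 4)
    (F : V →ₗ[ℝ] V →ₗ[ℝ] ℝ)
    (hanti : ∀ u v : V, F u v = -F v u)
    (hplucker : ∀ a b c d : V, F a b * F c d + F a c * F d b + F a d * F b c = 0) :
    ∃ p q : V →ₗ[ℝ] ℝ, ∀ u v : V, F u v = p u * q v - q u * p v := by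
  by_cases h0 : ∀ u v : V, F u v = 0
  · exact ⟨0, 0, fun u v => by simp [h0 u v]⟩
  · push_neg at h0
    obtain ⟨a, b, hab⟩ := h0
    refine ⟨(F a b)⁻¹ • (LinearMap.flip F b), F a, fun u v => ?_⟩
    have h := hplucker u v a b
    have h1 := hanti u a
    have h2 := hanti v a
    simp only [LinearMap.smul_apply, LinearMap.flip_apply, smul_eq_mul]
    field_simp
    linear_combination h - F b v * h1 - F u b * h2 + F a u * hanti v b
end

section
/- Let V be a 4-dimensional real vector space equipped with a nondegenerate symmetric bilinear form h of Lorentz signature (−,+,+,+), and let (l,n,x,y) be a null tetrad for h (a basis whose only nonvanishing inner products under h are h(l,n) = h(x,x) = h(y,y) = 1). Let F and G be the endomorphisms of V with components F^a_b = x^a y_b − y^a x_b and G^a_b = l^a n_b − n^a l_b (indices lowered and raised with h). If h′ is a symmetric bilinear form on V satisfying h′(Fu,v) + h′(u,Fv) = 0 and h′(Gu,v) + h′(u,Gv) = 0 for all u, v ∈ V, then there exist real numbers α, β with h′_{ab} = α h_{ab} + 2β l_{(a}n_{b)}, i.e. h′ = α h + β (l⊗n + n⊗l). -/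
set_option maxHeartbeats 1000000


/-- Let `(l,n,x,y)` be a null tetrad (a basis with the stated inner products) for a
Lorentz form `h` on a 4-dimensional real vector space, and let `F^a_b = x^a y_b - y^a x_b` and
`G^a_b = l^a n_b - n^a l_b`.  Any symmetric bilinear form `h'` satisfying
`h'(Fu,v) + h'(u,Fv) = 0` and `h'(Gu,v) + h'(u,Gv) = 0` for all `u,v` has the form
`h' = α h + β (l ⊗ n + n ⊗ l)` for some reals `α, β`. -/
theorem classB_constraint_form
    (V : Type*) [AddCommGroup V] [Module ℝ V]
    (hdim : Module.finrank ℝ V = 4)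
    (h : V →ₗ[ℝ] V →ₗ[ℝ] ℝ)
    (hsymm : ∀ u v : V, h u v = h v u)
    (l n x y : V)
    (hbasis : ∃ b : Module.Basis (Fin 4) ℝ V, ![l, n, x, y] = ⇑b)
    (hll : h l l = 0) (hnn : h n n = 0) (hxx : h x x = 1) (hyy : h y y = 1)
    (hln : h l n = 1) (hlx : h l x = 0) (hly : h l y = 0) (hnx : h n x = 0)
    (hny : h n y = 0) (hxy : h x y = 0)
    (h' : V →ₗ[ℝ] V →ₗ[ℝ] ℝ)
    (h'symm : ∀ u v : V, h' u v = h' v u)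
    (hF : ∀ u v : V, h' ((h y u) • x - (h x u) • y) v + h' u ((h y v) • x - (h x v) • y) = 0)
    (hG : ∀ u v : V, h' ((h n u) • l - (h l u) • n) v + h' u ((h n v) • l - (h l v) • n) = 0) :
    ∃ α β : ℝ, ∀ u v : V, h' u v = α * h u v + β * (h l u * h n v + h n u * h l v) := by
  obtain ⟨b, hb⟩ := hbasis
  have hb0 : b 0 = l := by rw [← hb]; rfl
  have hb1 : b 1 = n := by rw [← hb]; rfl
  have hb2 : b 2 = x := by rw [← hb]; rfl
  have hb3 : b 3 = y := by rw [← hb]; rfl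
  have hnl : h n l = 1 := (hsymm n l).trans hln
  have hxl : h x l = 0 := (hsymm x l).trans hlx
  have hyl : h y l = 0 := (hsymm y l).trans hly
  have hxn : h x n = 0 := (hsymm x n).trans hnx
  have hyn : h y n = 0 := (hsymm y n).trans hny
  have hyx : h y x = 0 := (hsymm y x).trans hxy
  -- component facts for h'
  have e_xy : h' x y = 0 := by
    have t := hF x x
    simp [hyx, hxx, h'symm y x] at t
    linarith
  have e_yx : h' y x = 0 := (h'symm y x).trans e_xy
  have e_xx : h' x x = h' y y := by
    have t := hF x y
    simp [hyx, hxx, hyy, hxy] at t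
    linarith
  have e_yl : h' y l = 0 := by
    have t := hF x l
    simp [hyx, hxx, hyl, hxl] at t
    linarith
  have e_ly : h' l y = 0 := (h'symm l y).trans e_yl
  have e_xl : h' x l = 0 := by
    have t := hF y l
    simp [hyy, hxy, hyl, hxl] at t
    linarith
  have e_lx : h' l x = 0 := (h'symm l x).trans e_xl
  have e_yn : h' y n = 0 := by
    have t := hF x n
    simp [hyx, hxx, hyn, hxn] at t
    linarith
  have e_ny : h' n y = 0 := (h'symm n y).trans e_yn
  have e_xn : h' x n = 0 := by
    have t := hF y n
    simp [hyy, hxy, hyn, hxn] at t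
    linarith
  have e_nx : h' n x = 0 := (h'symm n x).trans e_xn
  have e_ll : h' l l = 0 := by
    have t := hG l l
    simp [hnl, hll] at t
    linarith
  have e_nn : h' n n = 0 := by
    have t := hG n n
    simp [hnn, hln] at t
    linarith
  have e_nl : h' n l = h' l n := h'symm n l
  have e_xx : h' x x = h' y y := e_xx
  refine ⟨h' x x, h' l n - h' x x, ?_⟩
  have hm0 : b ⟨0, by omega⟩ = l := hb0
  have hm1 : b ⟨1, by omega⟩ = n := hb1
  have hm2 : b ⟨2, by omega⟩ = x := hb2
  have hm3 : b ⟨3, by omega⟩ = y := hb3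
  set Φ : V →ₗ[ℝ] V →ₗ[ℝ] ℝ :=
    (h' x x) • h + (h' l n - h' x x) • ((h l).smulRight (h n) + (h n).smulRight (h l)) with hΦdef
  have hΦ : ∀ u v : V, Φ u v = (h' x x) * h u v
      + (h' l n - h' x x) * (h l u * h n v + h n u * h l v) := by
    intro u v
    simp only [hΦdef, LinearMap.add_apply, LinearMap.smul_apply, LinearMap.smulRight_apply,
      smul_eq_mul]
    try ring
  have key : h' = Φ := by
    refine b.ext fun i => b.ext fun j => ?_
    fin_cases i <;> fin_cases j <;>
      simp only [hm0, hm1, hm2, hm3, hΦ] <;>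
      simp only [e_xy, e_yx, e_yl, e_ly, e_xl, e_lx, e_yn, e_ny, e_xn, e_nx,
        e_ll, e_nn, e_nl, e_xx, hll, hnn, hxx, hyy, hln, hlx, hly, hnx, hny, hxy,
        hnl, hxl, hyl, hxn, hyn, hyx] <;>
      ring
  intro u v
  conv_lhs => rw [key]
  rw [hΦ]
end

section
/- Let V be a 4-dimensional real vector space, g a nondegenerate symmetric bilinear form on V, and α, ψ covectors on V such that α_c g_{ab} − 2 g_{ab} ψ_c − g_{ac} ψ_b − g_{bc} ψ_a = 0 for all indices a, b, c (i.e. α(w)g(u,v) = 2g(u,v)ψ(w) + g(u,w)ψ(v) + g(v,w)ψ(u) for all u,v,w ∈ V). Then ψ = 0 (and consequently α = 0). -/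
/-- On a 4-dimensional real vector space with a nondegenerate symmetric bilinear
form `g`, if covectors `α, ψ` satisfy `α_c g_{ab} - 2 g_{ab} ψ_c - g_{ac} ψ_b - g_{bc} ψ_a = 0`
then `ψ = 0` and consequently `α = 0`. -/
theorem rank_argument_psi_zero
    (V : Type*) [AddCommGroup V] [Module ℝ V]
    (hdim : Module.finrank ℝ V = 4)
    (g : V →ₗ[ℝ] V →ₗ[ℝ] ℝ)
    (hsymm : ∀ u v : V, g u v = g v u)
    (hnondeg : ∀ u : V, (∀ v : V, g u v = 0) → u = 0)
    (α ψ : V →ₗ[ℝ] ℝ)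
    (hyp : ∀ u v w : V,
      α w * g u v - 2 * g u v * ψ w - g u w * ψ v - g v w * ψ u = 0) :
    ψ = 0 ∧ α = 0 := by
  haveI hfin : FiniteDimensional ℝ V := FiniteDimensional.of_finrank_pos (by omega)
  have key : ∀ w : V, α w = 2 * ψ w := by
    intro w
    by_contra hne
    have hne' : α w - 2 * ψ w ≠ 0 := sub_ne_zero.mpr hne
    set f : V →ₗ[ℝ] ℝ × ℝ := (g.flip w).prod ψ with hf
    have hker : 0 < Module.finrank ℝ (LinearMap.ker f) := by
      have h1 := LinearMap.finrank_range_add_finrank_ker f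
      have h2 : Module.finrank ℝ (LinearMap.range f) ≤ Module.finrank ℝ (ℝ × ℝ) :=
        Submodule.finrank_le _
      have h3 : Module.finrank ℝ (ℝ × ℝ) = 2 := by simp
      omega
    obtain ⟨⟨u, hu⟩, hx⟩ := Module.finrank_pos_iff_exists_ne_zero.mp hker
    have hu0 : u ≠ 0 := by simpa [Submodule.mk_eq_zero] using hx
    have hfu : f u = 0 := LinearMap.mem_ker.mp hu
    have hgw : g u w = 0 := by
      have := congrArg Prod.fst hfu
      simpa [hf, LinearMap.prod_apply] using this
    have hpu : ψ u = 0 := by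
      have := congrArg Prod.snd hfu
      simpa [hf, LinearMap.prod_apply] using this
    have : u = 0 := by
      apply hnondeg
      intro v
      have h := hyp u v w
      rw [hgw, hpu] at h
      have h' : (α w - 2 * ψ w) * g u v = 0 := by ring_nf; linarith [h]
      rcases mul_eq_zero.mp h' with h'' | h''
      · exact absurd h'' hne'
      · exact h''
    exact hu0 this

  have hpsi : ∀ u : V, ψ u = 0 := by
    intro u
    by_contra hpu
    have hgu : ∀ w : V, g u w = 0 := by
      intro w
      have h := hyp u u w
      rw [key w] at h
      have h2 : g u w * ψ u = 0 := by linear_combination (-(1:ℝ)/2) * h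
      rcases mul_eq_zero.mp h2 with h3 | h3
      · exact h3
      · exact absurd h3 hpu
    have : u = 0 := hnondeg u hgu
    rw [this] at hpu
    simp at hpu
  have hψ : ψ = 0 := by ext u; simpa using hpsi u
  refine ⟨hψ, ?_⟩
  ext w
  simp [key w, hpsi w]
end

section
/- Let E be a finite-dimensional real normed vector space, n a positive integer, A : E → M_n(ℝ) a smooth map into the real n×n matrices, m ∈ E, and α ∈ ℝ a simple root of the characteristic polynomial of A(m) (i.e. det(A(m) − αI) = 0 and the derivative in t of det(A(m) − tI) is nonzero at t = α). Then there exist an open neighbourhood V of m and a smooth function α̃ : V → ℝ with α̃(m) = α such that det(A(x) − α̃(x)I) = 0 for every x ∈ V. -/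
/-- A simple real root `α` of the characteristic polynomial of a smoothly varying
matrix `A(m)` extends to a smooth root function `α̃` on a neighbourhood of `m`. -/
theorem simple_root_extends_smoothly
    (E : Type*) [NormedAddCommGroup E] [NormedSpace ℝ E] [FiniteDimensional ℝ E]
    (n : ℕ) (hn : 0 < n)
    (A : E → Matrix (Fin n) (Fin n) ℝ)
    (hA : ∀ i j : Fin n, ContDiff ℝ (⊤ : ℕ∞) fun x => A x i j)
    (m : E) (α : ℝ)
    (hroot : (A m - α • (1 : Matrix (Fin n) (Fin n) ℝ)).det = 0)
    (hsimple : deriv (fun t : ℝ => (A m - t • (1 : Matrix (Fin n) (Fin n) ℝ)).det) α ≠ 0) :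
    ∃ V : Set E, IsOpen V ∧ m ∈ V ∧
      ∃ f : E → ℝ, ContDiffOn ℝ (⊤ : ℕ∞) f V ∧ f m = α ∧
        ∀ x ∈ V, (A x - f x • (1 : Matrix (Fin n) (Fin n) ℝ)).det = 0 := by
  classical
  set F : E × ℝ → ℝ := fun p => (A p.1 - p.2 • (1 : Matrix (Fin n) (Fin n) ℝ)).det with hFdef
  -- F is smooth
  have hFsmooth : ContDiff ℝ (⊤ : ℕ∞) F := by
    have hentry : ∀ i j : Fin n, ContDiff ℝ (⊤ : ℕ∞)
        (fun p : E × ℝ => (A p.1 - p.2 • (1 : Matrix (Fin n) (Fin n) ℝ)) i j) := by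
      intro i j
      simp only [Matrix.sub_apply, Matrix.smul_apply, Matrix.one_apply, smul_eq_mul]
      exact ((hA i j).comp contDiff_fst).sub (contDiff_snd.mul contDiff_const)
    have hEq : F = fun p : E × ℝ => ∑ σ : Equiv.Perm (Fin n),
        ((Equiv.Perm.sign σ : ℤ) : ℝ) *
          ∏ i, (A p.1 - p.2 • (1 : Matrix (Fin n) (Fin n) ℝ)) (σ i) i := by
      funext p; rw [hFdef]; exact Matrix.det_apply' _
    rw [hEq]
    exact ContDiff.sum fun σ _ =>
      contDiff_const.mul (contDiff_prod fun i _ => hentry (σ i) i)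
  have hroot' : F (m, α) = 0 := hroot
  set T : E × ℝ → (E × ℝ →L[ℝ] ℝ) := fun b => fderiv ℝ F b with hTdef
  have hFd : ∀ b, HasFDerivAt F (T b) b :=
    fun b => (hFsmooth.differentiable (by simp) b).hasFDerivAt
  -- relation between T b (0,1) and partial derivative in t
  have hTt : ∀ b : E × ℝ, HasDerivAt (fun t : ℝ => F (b.1, t)) (T b (0, 1)) b.2 := by
    intro b
    have hcurve : HasDerivAt (fun t : ℝ => ((b.1 : E), t)) ((0 : E), (1 : ℝ)) b.2 :=
      (hasDerivAt_const b.2 b.1).prodMk (hasDerivAt_id b.2)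
    exact (hFd (b.1, b.2)).comp_hasDerivAt b.2 hcurve
  have hc : T (m, α) ((0 : E), (1 : ℝ)) ≠ 0 := by
    rw [← (hTt (m, α)).deriv]; exact hsimple
  -- key linear algebra: the map S b is bijective when T b (0,1) ≠ 0
  set S : E × ℝ → (E × ℝ →L[ℝ] E × ℝ) :=
    fun b => (ContinuousLinearMap.fst ℝ E ℝ).prod (T b) with hSdef
  have hkey : ∀ b : E × ℝ, ∀ p : E × ℝ, T b p = T b (p.1, 0) + p.2 * T b (0, 1) := by
    intro b p
    have hp : p = (p.1, (0 : ℝ)) + p.2 • ((0 : E), (1 : ℝ)) := by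
      simp [Prod.ext_iff]
    conv_lhs => rw [hp]
    rw [map_add, map_smul]; rfl
  have hbij : ∀ b : E × ℝ, T b (0, 1) ≠ 0 → Function.Bijective (S b) := by
    intro b hb
    have hinj : Function.Injective (S b) := by
      intro p q hpq
      obtain ⟨h1, h2⟩ := Prod.ext_iff.mp hpq
      simp only [hSdef, ContinuousLinearMap.prod_apply, ContinuousLinearMap.coe_fst'] at h1 h2
      have e1 := hkey b p
      have e2 := hkey b q
      rw [h1] at e1
      rw [e1, e2] at h2
      have h4 : p.2 * T b (0, 1) = q.2 * T b (0, 1) := by linarith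
      exact Prod.ext_iff.mpr ⟨h1, mul_right_cancel₀ hb h4⟩
    exact ⟨hinj, LinearMap.injective_iff_surjective.mp hinj⟩
  -- G and its local inverse
  set G : E × ℝ → E × ℝ := fun p => (p.1, F p) with hGdef
  have hGsmooth : ContDiff ℝ (⊤ : ℕ∞) G := contDiff_fst.prodMk hFsmooth
  have hGd : ∀ b, HasFDerivAt G (S b) b := fun b => (hasFDerivAt_fst).prodMk (hFd b)
  have hGd' : ∀ (b : E × ℝ) (hb : T b (0, 1) ≠ 0),
      HasFDerivAt G
        (((LinearEquiv.ofBijective ((S b).toLinearMap)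
          (hbij b hb)).toContinuousLinearEquiv : E × ℝ →L[ℝ] E × ℝ)) b := by
    intro b hb
    have : ((LinearEquiv.ofBijective ((S b).toLinearMap)
        (hbij b hb)).toContinuousLinearEquiv : E × ℝ →L[ℝ] E × ℝ) = S b := by
      ext p <;> rfl
    rw [this]; exact hGd b
  set Φ : OpenPartialHomeomorph (E × ℝ) (E × ℝ) :=
    (hGsmooth.contDiffAt (x := (m, α))).toOpenPartialHomeomorph G (hGd' (m, α) hc) (by simp) with hΦdef
  have hΦcoe : (Φ : E × ℝ → E × ℝ) = G := rfl
  have hsource : (m, α) ∈ Φ.source :=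
    ContDiffAt.mem_toOpenPartialHomeomorph_source _ _ _
  have hGma : G (m, α) = (m, 0) := by
    exact Prod.ext_iff.mpr ⟨rfl, hroot'⟩
  have htarget : ((m : E), (0 : ℝ)) ∈ Φ.target := by
    rw [← hGma]
    exact ContDiffAt.image_mem_toOpenPartialHomeomorph_target _ _ _
  have hsymm_ma : Φ.symm (m, 0) = (m, α) := by
    rw [← hGma, ← hΦcoe]
    exact Φ.left_inv hsource
  -- the open set where the derivative stays invertible
  have hTcont : Continuous T := hFsmooth.continuous_fderiv (by simp)
  have hUopen : IsOpen {b : E × ℝ | T b (0, 1) ≠ 0} := by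
    have : Continuous fun b => T b ((0 : E), (1 : ℝ)) :=
      (ContinuousLinearMap.apply ℝ ℝ ((0 : E), (1 : ℝ))).continuous.comp hTcont
    exact isOpen_ne.preimage this
  set W : Set (E × ℝ) := Φ.target ∩ Φ.symm ⁻¹' {b : E × ℝ | T b (0, 1) ≠ 0} with hWdef
  have hWopen : IsOpen W := Φ.isOpen_inter_preimage_symm hUopen
  have hmW : ((m : E), (0 : ℝ)) ∈ W := by
    constructor
    · exact htarget
    · show T (Φ.symm (m, 0)) (0, 1) ≠ 0
      rw [hsymm_ma]; exact hc
  -- Φ.symm is smooth at every point of W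
  have hsymm_smooth : ∀ y ∈ W, ContDiffAt ℝ (⊤ : ℕ∞) Φ.symm y := by
    rintro y ⟨hy1, hy2⟩
    exact Φ.contDiffAt_symm hy1 (hGd' (Φ.symm y) hy2) (hGsmooth.contDiffAt)
  -- conclusion
  refine ⟨{x : E | (x, (0 : ℝ)) ∈ W}, ?_, hmW, fun x => (Φ.symm (x, 0)).2, ?_, ?_, ?_⟩
  · exact hWopen.preimage (Continuous.prodMk_left 0)
  · intro x hx
    have h1 : ContDiffAt ℝ (⊤ : ℕ∞) (fun x : E => (x, (0 : ℝ))) x :=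
      (contDiff_id.prodMk contDiff_const).contDiffAt
    have h2 := (hsymm_smooth _ hx).comp x h1
    exact (contDiffAt_snd.comp x h2).contDiffWithinAt
  · show (Φ.symm (m, 0)).2 = α
    rw [hsymm_ma]
  · intro x hx
    have hxt : ((x : E), (0 : ℝ)) ∈ Φ.target := hx.1
    have hGx : G (Φ.symm (x, 0)) = (x, 0) := by
      rw [← hΦcoe]; exact Φ.right_inv hxt
    have h1 : (Φ.symm (x, 0)).1 = x := congrArg Prod.fst hGx
    have h2 : F (Φ.symm (x, 0)) = 0 := congrArg Prod.snd hGx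
    show F (x, (Φ.symm (x, 0)).2) = 0
    have h3 : ((x : E), (Φ.symm (x, 0)).2) = Φ.symm (x, 0) := Prod.ext_iff.mpr ⟨h1.symm, rfl⟩
    rw [h3]
    exact h2
end
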